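/- arXiv:1908.09477 — 4 statements merged into one kernel-verified Lean document; each statement's English description precedes it below -/
import Mathlib

section
/- If every path through the matrix of a propositional formula F in disjunctive normal form (a set of clauses, where a path picks one literal from each clause) contains a complementary pair of literals {L, ¬L}, then F is valid (a tautology). -/
/-!
If some valuation falsified every clause, choosing a false literal from each clause would give a
path of false literals; but a connection `{A, ¬A}` on that path always contains a true literal.
-/

/-- A literal is an atom with a polarity. -/
def evalLit {α : Type} (v : α → Bool) (L : α × Bool) : Prop := v L.1 = L.2

/-- A set of literals contains a complementary pair `{L, ¬L}`. -/
def hasConnection {α : Type} (p : List (α × Bool)) : Prop :=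
  ∃ a : α, (a, true) ∈ p ∧ (a, false) ∈ p

/-- `p` is a path through matrix `M`: it picks one literal from each clause. -/
def IsPath {α : Type} (M : List (List (α × Bool))) (p : List (α × Bool)) : Prop :=
  List.Forall₂ (fun L C => L ∈ C) p M

/-- The DNF matrix `M` is valid: under every valuation, some clause is wholly true. -/
def MatrixValid {α : Type} (M : List (List (α × Bool))) : Prop :=
  ∀ v : α → Bool, ∃ C ∈ M, ∀ L ∈ C, evalLit v L

theorem List.exists_forall₂_forall_of_forall_exists {β γ : Type*} {R : β → γ → Prop}
    {P : β → Prop} (l : List γ) (h : ∀ c ∈ l, ∃ b, R b c ∧ P b) :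
    ∃ l' : List β, List.Forall₂ R l' l ∧ ∀ b ∈ l', P b := by
  induction l with
  | nil => exact ⟨[], .nil, by simp⟩
  | cons c l ih =>
    obtain ⟨b, hbc, hb⟩ := h c List.mem_cons_self
    obtain ⟨l', hl', hPl'⟩ := ih fun c' hc' => h c' (List.mem_cons_of_mem c hc')
    refine ⟨b :: l', .cons hbc hl', ?_⟩
    simpa only [List.forall_mem_cons] using ⟨hb, hPl'⟩

theorem hasConnection.exists_evalLit {α : Type} {p : List (α × Bool)} (hp : hasConnection p)
    (v : α → Bool) : ∃ L ∈ p, evalLit v L := by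
  obtain ⟨a, htrue, hfalse⟩ := hp
  cases hva : v a
  · exact ⟨(a, false), hfalse, hva⟩
  · exact ⟨(a, true), htrue, hva⟩

theorem paths_closed_imp_valid {α : Type} (M : List (List (α × Bool)))
    (h : ∀ p, IsPath M p → hasConnection p) : MatrixValid M := by
  intro v
  by_contra hfalsified
  push Not at hfalsified
  obtain ⟨p, hpath, hp⟩ := List.exists_forall₂_forall_of_forall_exists M hfalsified
  obtain ⟨L, hL, hLtrue⟩ := (h p hpath).exists_evalLit v
  exact hp L hL hLtrue
end

section
/- Conversely, if a DNF matrix is valid (its disjunction of clause-conjunctions is a tautology), then every path through the matrix contains a complementary pair of literals. -/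
/-!
Suppose some path `p` contains no complementary pair. Set every atom that occurs negatively on
`p` to `true` and every other atom to `false`; then each literal on `p` is false. Since `p` meets
every clause, every clause contains a false literal, so this valuation falsifies the matrix.
-/

theorem List.Forall₂.exists_mem_of_mem_right {α β : Type*} {R : α → β → Prop}
    {l₁ : List α} {l₂ : List β} (h : List.Forall₂ R l₁ l₂) {b : β} (hb : b ∈ l₂) :
    ∃ a ∈ l₁, R a b := by
  induction h with
  | nil => simp at hb
  | @cons a _ _ _ hab _ ih =>
    rcases List.mem_cons.mp hb with rfl | hb
    · exact ⟨a, List.mem_cons_self, hab⟩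
    · obtain ⟨a', ha', hR⟩ := ih hb
      exact ⟨a', List.mem_cons_of_mem _ ha', hR⟩

def refutingValuation {α : Type} [DecidableEq α] (p : List (α × Bool)) (a : α) : Bool :=
  decide ((a, false) ∈ p)

theorem not_evalLit_refutingValuation {α : Type} [DecidableEq α] {p : List (α × Bool)}
    (hopen : ¬ hasConnection p) {L : α × Bool} (hL : L ∈ p) :
    ¬ evalLit (refutingValuation p) L := by
  obtain ⟨a, _ | _⟩ := L
  · simpa [evalLit, refutingValuation] using hL
  · simpa [evalLit, refutingValuation] using fun hf => hopen ⟨a, hL, hf⟩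

theorem valid_imp_paths_closed {α : Type} (M : List (List (α × Bool)))
    (h : MatrixValid M) : ∀ p, IsPath M p → hasConnection p := by
  classical
  intro p hp
  by_contra hopen
  obtain ⟨C, hC, hCtrue⟩ := h (refutingValuation p)
  obtain ⟨L, hLp, hLC⟩ := List.Forall₂.exists_mem_of_mem_right hp hC
  exact not_evalLit_refutingValuation hopen hLp (hCtrue L hLC)
end

section
/- The quantified sequent rule (l∃) is sound: let X, Y be sets of concepts, X' = {a | ∀r.a ∈ X} and Y' = {a | ∃r.a ∈ Y}. If the sequent X', b ⊢ Y' is valid, then the sequent X, ∃r.b ⊢ Y restricted to its quantified members — i.e., {∀r.a : a ∈ X'}, ∃r.b ⊢ {∃r.a : a ∈ Y'} — is valid. -/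
inductive ALCConcept (α ρ : Type) : Type
  | atom : α → ALCConcept α ρ
  | neg : ALCConcept α ρ → ALCConcept α ρ
  | conj : ALCConcept α ρ → ALCConcept α ρ → ALCConcept α ρ
  | disj : ALCConcept α ρ → ALCConcept α ρ → ALCConcept α ρ
  | all : ρ → ALCConcept α ρ → ALCConcept α ρ
  | ex : ρ → ALCConcept α ρ → ALCConcept α ρ

structure ALCInterp (α ρ : Type) where
  dom : Type
  atomI : α → Set dom
  roleI : ρ → Set (dom × dom)

variable {α ρ : Type}

def ALCInterp.interp (I : ALCInterp α ρ) : ALCConcept α ρ → Set I.dom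
  | .atom a => I.atomI a
  | .neg C => (I.interp C)ᶜ
  | .conj C D => I.interp C ∩ I.interp D
  | .disj C D => I.interp C ∪ I.interp D
  | .all r C => {x | ∀ y, (x, y) ∈ I.roleI r → y ∈ I.interp C}
  | .ex r C => {x | ∃ y, (x, y) ∈ I.roleI r ∧ y ∈ I.interp C}

/-- A sequent `X ⊢ Y` is valid iff in every interpretation, every domain element
belonging to all concepts of `X` belongs to some concept of `Y`. -/
def SeqValid (X Y : Set (ALCConcept α ρ)) : Prop :=
  ∀ I : ALCInterp α ρ, ∀ x : I.dom,
    (∀ C ∈ X, x ∈ I.interp C) → ∃ C ∈ Y, x ∈ I.interp C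

theorem ALCInterp.forall_mem_interp_of_forall_mem_interp_all (I : ALCInterp α ρ) {r : ρ}
    {X : Set (ALCConcept α ρ)} {x y : I.dom} (hx : ∀ C ∈ ALCConcept.all r '' X, x ∈ I.interp C)
    (hxy : (x, y) ∈ I.roleI r) : ∀ C ∈ X, y ∈ I.interp C :=
  fun C hC => hx _ ⟨C, hC, rfl⟩ y hxy

theorem l_exists_sound {α ρ : Type} (X' Y' : Set (ALCConcept α ρ)) (r : ρ) (b : ALCConcept α ρ)
    (h : SeqValid (insert b X') Y') :
    SeqValid (insert (ALCConcept.ex r b) ((ALCConcept.all r) '' X')) ((ALCConcept.ex r) '' Y') := by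
  intro I x hx
  rw [Set.forall_mem_insert] at hx
  obtain ⟨⟨y, hxy, hyb⟩, hxX⟩ := hx
  have hyX' := I.forall_mem_interp_of_forall_mem_interp_all hxX hxy
  obtain ⟨C, hCY, hyC⟩ := h I y (Set.forall_mem_insert.2 ⟨hyb, hyX'⟩)
  exact ⟨.ex r C, Set.mem_image_of_mem _ hCY, y, hxy, hyC⟩
end

section
/- The quantified sequent rule (r∀) is sound: if X' ⊢ b, Y' is valid, where X' = {a | ∀r.a ∈ X} and Y' = {a | ∃r.a ∈ Y}, then the sequent {∀r.a : a ∈ X'} ⊢ ∀r.b, {∃r.a : a ∈ Y'} is valid. -/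
variable {α ρ : Type}

namespace ALCInterp

theorem mem_interp_all {I : ALCInterp α ρ} {r : ρ} {C : ALCConcept α ρ} {x : I.dom} :
    x ∈ I.interp (.all r C) ↔ ∀ y, (x, y) ∈ I.roleI r → y ∈ I.interp C :=
  Iff.rfl

theorem mem_interp_ex_of_roleI {I : ALCInterp α ρ} {r : ρ} {C : ALCConcept α ρ} {x y : I.dom}
    (hxy : (x, y) ∈ I.roleI r) (hy : y ∈ I.interp C) : x ∈ I.interp (.ex r C) :=
  ⟨y, hxy, hy⟩

theorem forall_mem_interp_of_roleI {I : ALCInterp α ρ} {r : ρ} {X : Set (ALCConcept α ρ)}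
    {x y : I.dom} (hx : ∀ C ∈ ALCConcept.all r '' X, x ∈ I.interp C)
    (hxy : (x, y) ∈ I.roleI r) : ∀ C ∈ X, y ∈ I.interp C :=
  fun C hC => mem_interp_all.mp (hx _ ⟨C, hC, rfl⟩) y hxy

end ALCInterp

open ALCInterp in
theorem r_forall_sound {α ρ : Type} (X' Y' : Set (ALCConcept α ρ)) (r : ρ) (b : ALCConcept α ρ)
    (h : SeqValid X' (insert b Y')) :
    SeqValid ((ALCConcept.all r) '' X') (insert (ALCConcept.all r b) ((ALCConcept.ex r) '' Y')) := by
  intro I x hx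
  by_cases hb : x ∈ I.interp (.all r b)
  · exact ⟨_, Set.mem_insert _ _, hb⟩
  -- a witness `y` against `∀r.b` satisfies `X'` but not `b`, so it satisfies some `a ∈ Y'`
  obtain ⟨y, hxy, hyb⟩ : ∃ y, (x, y) ∈ I.roleI r ∧ y ∉ I.interp b := by
    simpa [mem_interp_all] using hb
  obtain ⟨C, hC, hyC⟩ := h I y (forall_mem_interp_of_roleI hx hxy)
  rcases hC with rfl | hCY
  · exact absurd hyC hyb
  · exact ⟨_, Set.mem_insert_of_mem _ ⟨C, hCY, rfl⟩, mem_interp_ex_of_roleI hxy hyC⟩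
end
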